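/- One-dimensional version of the exact formula (E) for the energy of the first excited state: let ψ_0, ψ_1 : ℝ → ℝ be twice continuously differentiable with −ψ_0'' + Vψ_0 = 0 and −ψ_1'' + Vψ_1 = E_1 ψ_1 on ℝ, let b ∈ ℝ be a point where ψ_0'(b) = 0, assume the Wronskian ψ_1(x)ψ_0'(x) − ψ_0(x)ψ_1'(x) tends to 0 as x → −∞, and assume ψ_1 ψ_0 is Lebesgue integrable on (−∞, b]. Then E_1 ∫_{−∞}^{b} ψ_1(x) ψ_0(x) dx = −ψ_0(b) ψ_1'(b). -/

import Mathlib

/-!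
The Wronskian `ψ₁ψ₀' − ψ₀ψ₁'` of two solutions of `−u'' + Vu = Eu` with energies `E₁` and `E₀`
has derivative `(E₁ − E₀)ψ₁ψ₀`, the potential cancelling. Integrating over `(−∞, b]` gives
`(E₁ − E₀)∫ψ₁ψ₀ = W(b) − W(−∞)`; with `E₀ = 0`, `W(−∞) = 0` and `ψ₀'(b) = 0` this is the formula.
-/

noncomputable section

open MeasureTheory Filter

def wronskian (f g : ℝ → ℝ) (x : ℝ) : ℝ := f x * deriv g x - g x * deriv f x

theorem hasDerivAt_wronskian {f g : ℝ → ℝ} (hf : ContDiff ℝ 2 f) (hg : ContDiff ℝ 2 g) (x : ℝ) :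
    HasDerivAt (wronskian f g) (f x * deriv (deriv g) x - g x * deriv (deriv f) x) x := by
  have hW := ((hf.differentiable two_ne_zero x).hasDerivAt.mul
      (hg.differentiable_deriv_two x).hasDerivAt).sub
    ((hg.differentiable two_ne_zero x).hasDerivAt.mul (hf.differentiable_deriv_two x).hasDerivAt)
  exact hW.congr_deriv (by ring)

theorem hasDerivAt_wronskian_of_schrodinger {V : ℝ → ℝ} {E E' : ℝ} {f g : ℝ → ℝ}
    (hf : ContDiff ℝ 2 f) (hg : ContDiff ℝ 2 g)
    (hf_eq : ∀ x, -deriv (deriv f) x + V x * f x = E' * f x)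
    (hg_eq : ∀ x, -deriv (deriv g) x + V x * g x = E * g x) (x : ℝ) :
    HasDerivAt (wronskian f g) ((E' - E) * (f x * g x)) x := by
  convert hasDerivAt_wronskian hf hg x using 1
  linear_combination f x * hg_eq x - g x * hf_eq x

/-- One-dimensional version of the exact formula for the energy of the first excited
state: if `−ψ₀'' + Vψ₀ = 0`, `−ψ₁'' + Vψ₁ = E₁ψ₁`, `ψ₀'(b) = 0`, the Wronskian
`ψ₁ψ₀' − ψ₀ψ₁'` tends to `0` at `−∞`, and `ψ₁ψ₀` is integrable on `(−∞, b]`, then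
`E₁ ∫_{−∞}^{b} ψ₁ψ₀ dx = −ψ₀(b) ψ₁'(b)`. -/
theorem first_excited_energy_formula_1d
    (V : ℝ → ℝ) (E₁ : ℝ) (ψ₀ ψ₁ : ℝ → ℝ)
    (hψ₀ : ContDiff ℝ 2 ψ₀) (hψ₁ : ContDiff ℝ 2 ψ₁)
    (heq₀ : ∀ x, -deriv (deriv ψ₀) x + V x * ψ₀ x = 0)
    (heq₁ : ∀ x, -deriv (deriv ψ₁) x + V x * ψ₁ x = E₁ * ψ₁ x)
    (b : ℝ) (hb : deriv ψ₀ b = 0)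
    (hwron : Tendsto (fun x => ψ₁ x * deriv ψ₀ x - ψ₀ x * deriv ψ₁ x) atBot (nhds 0))
    (hint : IntegrableOn (fun x => ψ₁ x * ψ₀ x) (Set.Iic b)) :
    E₁ * ∫ x in Set.Iic b, ψ₁ x * ψ₀ x = -(ψ₀ b * deriv ψ₁ b) := by
  have hW : ∀ x ∈ Set.Iic b, HasDerivAt (wronskian ψ₁ ψ₀) ((E₁ - 0) * (ψ₁ x * ψ₀ x)) x :=
    fun x _ => hasDerivAt_wronskian_of_schrodinger hψ₁ hψ₀ heq₁
      (fun x => (heq₀ x).trans (zero_mul _).symm) x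
  have hFTC := integral_Iic_of_hasDerivAt_of_tendsto' hW (hint.const_mul _) hwron
  rw [integral_const_mul, sub_zero, sub_zero] at hFTC
  rw [hFTC, wronskian, hb]
  ring
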